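/- Let ρ > 0 and γ ∈ (0,1]. Define p(0,0) = (2γ²ρ + 2γ² + 3γρ² + 6γρ + 2γ)/((ρ + 1)(2γ²(ρ + 1)² + γ(2ρ³ + 9ρ² + 8ρ + 2) + 2ρ²(ρ + 1))), and with E = 2γ + 6ρ + 2γρ + 3ρ² + 2 set p(1,0) = 2ρ(ρ + 1)(γ + ρ + 1)/E · p(0,0), p(0,1) = 2ρ²(ρ + 1)/(γE) · p(0,0), p(0,2) = 2ρ(γ + 3ρ + γρ + ρ² + 1)/E · p(0,0), p(1,1) = 2ρ²(γ + ρ)(ρ + 1)/(γE) · p(0,0), p(1,2) = ρ²(2γ + 5ρ + 2γρ + 2ρ² + 2)/E · p(0,0). Then all p(m,n) are nonnegative, they sum to 1, and they satisfy the partial flexibility balance equations with k = 1; i.e., p is the stationary distribution of the symmetric partial flexibility system. -/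

import Mathlib

/-!
The balance equations are linear and homogeneous, so they may be checked on the weights
`(ρ + 1) D · p`, where `(ρ + 1) D` is the denominator of `p(0,0)`: these are polynomials in
`ρ` and `γ` (the numerator of `p(0,0)` is `γ E`, which clears the denominators `E` and `γ E`
of the other entries), visibly nonnegative, and summing to `(ρ + 1) D`.
-/

/-- The balance equations of the partial flexibility system with parameters `ρ`, `k`, `γ`. -/
def PartialBalance (ρ k γ : ℝ) (p : Fin 2 → Fin 3 → ℝ) : Prop :=
  (ρ + k*ρ) * p 0 0 = p 1 0 + γ * p 0 1 + p 0 2 ∧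
  (ρ + k*ρ + 1) * p 1 0 = ρ * p 0 0 + γ * p 1 1 + p 1 2 ∧
  2 * p 1 2 = ρ * p 0 2 + k*ρ * p 1 0 ∧
  (ρ + 1) * p 0 2 = k*ρ * p 0 0 + p 1 2 ∧
  (1 + γ) * p 1 1 = ρ * (p 0 1 + p 1 0) ∧
  (ρ + γ) * p 0 1 = p 1 1

/-- `p` is a stationary distribution of the partial flexibility system. -/
def PartialStationary (ρ k γ : ℝ) (p : Fin 2 → Fin 3 → ℝ) : Prop :=
  (∀ m n, 0 ≤ p m n) ∧ (∑ m : Fin 2, ∑ n : Fin 3, p m n) = 1 ∧ PartialBalance ρ k γ p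

/-- Throughput of the partial flexibility system. -/
noncomputable def Tps (ρ k : ℝ) (p : Fin 2 → Fin 3 → ℝ) : ℝ :=
  ρ * (1 - p 1 1 - p 1 2) + k*ρ * (1 - p 1 1 - p 1 2 - p 0 1 - p 0 2)

section

variable {ρ k γ : ℝ}

theorem PartialBalance.smul {q : Fin 2 → Fin 3 → ℝ} (h : PartialBalance ρ k γ q) (c : ℝ) :
    PartialBalance ρ k γ (c • q) := by
  obtain ⟨h₁, h₂, h₃, h₄, h₅, h₆⟩ := h
  simp only [PartialBalance, Pi.smul_apply, smul_eq_mul]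
  exact ⟨by linear_combination c * h₁, by linear_combination c * h₂, by linear_combination c * h₃,
    by linear_combination c * h₄, by linear_combination c * h₅, by linear_combination c * h₆⟩

theorem partialStationary_inv_sum_smul {q : Fin 2 → Fin 3 → ℝ} (hq : ∀ m n, 0 ≤ q m n)
    (hS : 0 < ∑ m, ∑ n, q m n) (hb : PartialBalance ρ k γ q) :
    PartialStationary ρ k γ ((∑ m, ∑ n, q m n)⁻¹ • q) := by
  refine ⟨fun m n => mul_nonneg (inv_nonneg.2 hS.le) (hq m n), ?_, hb.smul _⟩
  simp only [Pi.smul_apply, smul_eq_mul, ← Finset.mul_sum]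
  exact inv_mul_cancel₀ hS.ne'

end

def symmetricPartialWeights (ρ γ : ℝ) : Fin 2 → Fin 3 → ℝ :=
  ![![γ*(2*γ + 6*ρ + 2*γ*ρ + 3*ρ^2 + 2), 2*ρ^2*(ρ + 1), 2*γ*ρ*(γ + 3*ρ + γ*ρ + ρ^2 + 1)],
    ![2*γ*ρ*(ρ + 1)*(γ + ρ + 1), 2*ρ^2*(γ + ρ)*(ρ + 1), γ*ρ^2*(2*γ + 5*ρ + 2*γ*ρ + 2*ρ^2 + 2)]]

theorem partialBalance_symmetricPartialWeights (ρ γ : ℝ) :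
    PartialBalance ρ 1 γ (symmetricPartialWeights ρ γ) := by
  simp only [PartialBalance, symmetricPartialWeights, Fin.isValue, Matrix.cons_val', Matrix.cons_val,
    Matrix.cons_val_zero, Matrix.cons_val_one, Matrix.cons_val_fin_one]
  refine ⟨?_, ?_, ?_, ?_, ?_, ?_⟩ <;> ring

theorem symmetricPartialWeights_nonneg {ρ γ : ℝ} (hρ : 0 ≤ ρ) (hγ : 0 ≤ γ) (m : Fin 2) (n : Fin 3) :
    0 ≤ symmetricPartialWeights ρ γ m n := by
  fin_cases m <;> fin_cases n <;>
    simp only [symmetricPartialWeights, Fin.isValue, Fin.zero_eta, Fin.mk_one, Fin.reduceFinMk,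
      Matrix.cons_val', Matrix.cons_val, Matrix.cons_val_zero, Matrix.cons_val_one,
      Matrix.cons_val_fin_one] <;>
    positivity

theorem sum_symmetricPartialWeights (ρ γ : ℝ) :
    ∑ m, ∑ n, symmetricPartialWeights ρ γ m n =
      (ρ + 1)*(2*γ^2*(ρ + 1)^2 + γ*(2*ρ^3 + 9*ρ^2 + 8*ρ + 2) + 2*ρ^2*(ρ + 1)) := by
  simp only [symmetricPartialWeights, Fin.sum_univ_two, Fin.sum_univ_three, Matrix.cons_val_zero,
    Matrix.cons_val_one, Matrix.cons_val_two, Matrix.head_cons, Matrix.tail_cons]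
  ring

/-- the given family `p` is the stationary distribution of the symmetric
(`k = 1`) partial flexibility system. -/
theorem stmt_5 (ρ γ : ℝ) (hρ : 0 < ρ) (hγ : γ ∈ Set.Ioc (0:ℝ) 1) :
    PartialStationary ρ 1 γ
      (![![(2*γ^2*ρ + 2*γ^2 + 3*γ*ρ^2 + 6*γ*ρ + 2*γ) /
            ((ρ + 1)*(2*γ^2*(ρ + 1)^2 + γ*(2*ρ^3 + 9*ρ^2 + 8*ρ + 2) + 2*ρ^2*(ρ + 1))),
          2*ρ^2*(ρ + 1)/(γ*(2*γ + 6*ρ + 2*γ*ρ + 3*ρ^2 + 2)) *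
            ((2*γ^2*ρ + 2*γ^2 + 3*γ*ρ^2 + 6*γ*ρ + 2*γ) /
              ((ρ + 1)*(2*γ^2*(ρ + 1)^2 + γ*(2*ρ^3 + 9*ρ^2 + 8*ρ + 2) + 2*ρ^2*(ρ + 1)))),
          2*ρ*(γ + 3*ρ + γ*ρ + ρ^2 + 1)/(2*γ + 6*ρ + 2*γ*ρ + 3*ρ^2 + 2) *
            ((2*γ^2*ρ + 2*γ^2 + 3*γ*ρ^2 + 6*γ*ρ + 2*γ) /
              ((ρ + 1)*(2*γ^2*(ρ + 1)^2 + γ*(2*ρ^3 + 9*ρ^2 + 8*ρ + 2) + 2*ρ^2*(ρ + 1))))],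
        ![2*ρ*(ρ + 1)*(γ + ρ + 1)/(2*γ + 6*ρ + 2*γ*ρ + 3*ρ^2 + 2) *
            ((2*γ^2*ρ + 2*γ^2 + 3*γ*ρ^2 + 6*γ*ρ + 2*γ) /
              ((ρ + 1)*(2*γ^2*(ρ + 1)^2 + γ*(2*ρ^3 + 9*ρ^2 + 8*ρ + 2) + 2*ρ^2*(ρ + 1)))),
          2*ρ^2*(γ + ρ)*(ρ + 1)/(γ*(2*γ + 6*ρ + 2*γ*ρ + 3*ρ^2 + 2)) *
            ((2*γ^2*ρ + 2*γ^2 + 3*γ*ρ^2 + 6*γ*ρ + 2*γ) /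
              ((ρ + 1)*(2*γ^2*(ρ + 1)^2 + γ*(2*ρ^3 + 9*ρ^2 + 8*ρ + 2) + 2*ρ^2*(ρ + 1)))),
          ρ^2*(2*γ + 5*ρ + 2*γ*ρ + 2*ρ^2 + 2)/(2*γ + 6*ρ + 2*γ*ρ + 3*ρ^2 + 2) *
            ((2*γ^2*ρ + 2*γ^2 + 3*γ*ρ^2 + 6*γ*ρ + 2*γ) /
              ((ρ + 1)*(2*γ^2*(ρ + 1)^2 + γ*(2*ρ^3 + 9*ρ^2 + 8*ρ + 2) + 2*ρ^2*(ρ + 1))))]]) := by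
  obtain ⟨hγ0, -⟩ := hγ
  have hS := sum_symmetricPartialWeights ρ γ
  have hSpos : 0 < ∑ m, ∑ n, symmetricPartialWeights ρ γ m n := by rw [hS]; positivity
  convert partialStationary_inv_sum_smul
    (symmetricPartialWeights_nonneg hρ.le hγ0.le) hSpos (partialBalance_symmetricPartialWeights ρ γ)
    using 1
  have hE : 2*γ + 6*ρ + 2*γ*ρ + 3*ρ^2 + 2 ≠ 0 := by positivity
  rw [hS]
  ext m n
  fin_cases m <;> fin_cases n <;>
    simp only [symmetricPartialWeights, Pi.smul_apply, smul_eq_mul, Fin.isValue, Fin.zero_eta,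
      Fin.mk_one, Fin.reduceFinMk, Matrix.cons_val', Matrix.cons_val, Matrix.cons_val_zero,
      Matrix.cons_val_one, Matrix.cons_val_fin_one] <;>
    field_simp <;> ring
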